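/- arXiv:1909.12830 — 3 statements merged into one kernel-verified Lean document; each statement's English description precedes it below -/
import Mathlib

section
/- Let n ≥ 1 and let k be an integer with 0 < k < n. Let x ∈ ℝⁿ have pairwise distinct coordinates, and for each τ > 0 let y*(τ) be the unique minimizer of −xᵀy − τ·H_b(y) over {y ∈ ℝⁿ : 0 < yᵢ < 1 for all i, Σᵢ yᵢ = k}. Then as τ → 0⁺, y*(τ)ᵢ → 1 for every index i whose coordinate xᵢ is among the k largest coordinates of x, and y*(τ)ᵢ → 0 for every other index i. In other words, the temperature-scaled LML projection approaches the hard top-k operation as τ → 0⁺. -/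
open Finset Filter

/-- The binary entropy function `H_b(y) = -∑ i, [y i log (y i) + (1 - y i) log (1 - y i)]`. -/
noncomputable def binEntropy {n : ℕ} (y : Fin n → ℝ) : ℝ :=
  -(∑ i, (y i * Real.log (y i) + (1 - y i) * Real.log (1 - y i)))

/-!
Let `T` be the set of the `k` largest coordinates and `δ = min_T x - max_{Tᶜ} x > 0` the gap.
For every feasible `y`, `∑_{i ∈ T} xᵢ - ⟪x, y⟫ ≥ δ · ∑_{i ∉ T} yᵢ`. The indicator of `T` lies in
the closure of the feasible set and has entropy `0`, so by continuity the minimizer `y(τ)` satisfies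
`∑_{i ∈ T} xᵢ - ⟪x, y(τ)⟫ ≤ τ H_b(y(τ)) ≤ τ n log 2`. Hence the mass of `y(τ)` outside `T` is
`O(τ)`, and since `∑ yᵢ = k = #T` the same quantity bounds `1 - y(τ)ᵢ` for `i ∈ T`.
-/

open scoped Topology

theorem isMinOn_of_forall_ne_lt {α β : Type*} [Preorder β] {f : α → β} {s : Set α} {a : α}
    (h : ∀ z ∈ s, z ≠ a → f a < f z) : IsMinOn f s a :=
  isMinOn_iff.mpr fun z hz => (eq_or_ne z a).elim (fun hza => hza ▸ le_rfl) fun hne =>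
    (h z hz hne).le

section DescRank

variable {ι α : Type*} [Fintype ι] [LinearOrder α] (x : ι → α)

def descRank (i : ι) : ℕ := #{j | x i < x j}

variable {x}

theorem descRank_lt_descRank_of_lt {i j : ι} (h : x i < x j) : descRank x j < descRank x i :=
  card_lt_card <| (ssubset_iff_of_subset fun l hl => by simp_all [h.trans]).mpr
    ⟨j, by simpa using h, by simp⟩

theorem descRank_lt_card (i : ι) : descRank x i < Fintype.card ι :=
  card_lt_univ_of_notMem (x := i) (by simp)

theorem lt_of_descRank_lt_descRank (hx : Function.Injective x) {i j : ι}
    (h : descRank x i < descRank x j) : x j < x i := by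
  rcases lt_trichotomy (x i) (x j) with hij | hij | hij
  · exact absurd (descRank_lt_descRank_of_lt hij) h.not_gt
  · exact absurd (congrArg (descRank x) (hx hij)) h.ne
  · exact hij

theorem descRank_injective (hx : Function.Injective x) : Function.Injective (descRank x) :=
  fun i j hij => by_contra fun hne => by
    rcases (hx.ne hne).lt_or_gt with h | h
    · exact (descRank_lt_descRank_of_lt h).ne' hij
    · exact (descRank_lt_descRank_of_lt h).ne hij

theorem card_descRank_lt (hx : Function.Injective x) {k : ℕ} (hk : k ≤ Fintype.card ι) :
    #{i | descRank x i < k} = k := by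
  have himage : univ.image (descRank x) = range (Fintype.card ι) :=
    eq_of_subset_of_card_le (fun m hm => by
        obtain ⟨i, -, rfl⟩ := mem_image.mp hm
        exact mem_range.mpr (descRank_lt_card i))
      (by simp [card_image_of_injective _ (descRank_injective hx)])
  have hrange : (range (Fintype.card ι)).filter (· < k) = range k := by
    ext m; simp only [mem_filter, mem_range]; omega
  rw [← card_image_of_injective _ (descRank_injective hx),
    ← filter_image (s := univ) (p := (· < k)), himage, hrange, card_range]

end DescRank

section MassBound

variable {ι : Type*} [Fintype ι] [DecidableEq ι] {T : Finset ι} {y : ι → ℝ}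

theorem sum_one_sub_eq_sum_compl (hsum : ∑ i, y i = #T) :
    ∑ i ∈ T, (1 - y i) = ∑ i ∈ Tᶜ, y i := by
  rw [sum_sub_distrib, ← sum_add_sum_compl T y] at *
  simp only [sum_const, nsmul_eq_mul, mul_one]
  linarith

theorem mul_sum_compl_le_sum_sub_sum_mul {x : ι → ℝ} {a b : ℝ} (hy : ∀ i, y i ∈ Set.Icc 0 1)
    (hsum : ∑ i, y i = #T) (ha : ∀ i ∈ T, a ≤ x i) (hb : ∀ i ∈ Tᶜ, x i ≤ b) :
    (a - b) * ∑ i ∈ Tᶜ, y i ≤ ∑ i ∈ T, x i - ∑ i, x i * y i := by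
  have hT : a * ∑ i ∈ Tᶜ, y i ≤ ∑ i ∈ T, x i * (1 - y i) := by
    rw [← sum_one_sub_eq_sum_compl hsum, mul_sum]
    exact sum_le_sum fun i hi => mul_le_mul_of_nonneg_right (ha i hi) (by linarith [(hy i).2])
  have hTc : ∑ i ∈ Tᶜ, x i * y i ≤ b * ∑ i ∈ Tᶜ, y i := by
    rw [mul_sum]
    exact sum_le_sum fun i hi => mul_le_mul_of_nonneg_right (hb i hi) (hy i).1
  have hsplit : ∑ i ∈ T, x i - ∑ i, x i * y i
      = ∑ i ∈ T, x i * (1 - y i) - ∑ i ∈ Tᶜ, x i * y i := by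
    rw [← sum_add_sum_compl T fun i => x i * y i]
    simp only [mul_one_sub, sum_sub_distrib]
    ring
  linarith

end MassBound

section Polytope

variable (ι : Type*) [Fintype ι]

/-- The relative interior of the LML polytope `L_k = {y ∈ [0,1]ⁿ : ∑ yᵢ = k}`. -/
def lmlPolytope (k : ℝ) : Set (ι → ℝ) := {z | (∀ i, z i ∈ Set.Ioo 0 1) ∧ ∑ i, z i = k}

variable {ι}

theorem indicator_mem_closure_lmlPolytope [DecidableEq ι] {T : Finset ι} (hT0 : 0 < #T)
    (hT : #T < Fintype.card ι) :
    (fun i => if i ∈ T then 1 else 0 : ι → ℝ) ∈ closure (lmlPolytope ι #T) := by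
  have hN : (0 : ℝ) < Fintype.card ι := by exact_mod_cast hT0.trans hT
  set c : ℝ := #T / Fintype.card ι
  have hc0 : 0 < c := by positivity
  have hc1 : c < 1 := (div_lt_one hN).mpr (by exact_mod_cast hT)
  refine closure_mono ?_ <| segment_subset_closure_openSegment (y := fun _ => c) <|
    left_mem_segment ℝ _ _
  rintro z ⟨s, t, hs, ht, hst, rfl⟩
  refine ⟨fun i => ?_, ?_⟩
  · by_cases hi : i ∈ T <;> simp only [hi, Pi.add_apply, Pi.smul_apply, smul_eq_mul, if_true,
      if_false] <;> constructor <;> nlinarith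
  · simp only [Pi.add_apply, Pi.smul_apply, smul_eq_mul, sum_add_distrib, ← mul_sum, sum_ite_mem,
      univ_inter, sum_const, nsmul_eq_mul, mul_one, card_univ, c]
    field_simp
    linear_combination hst

end Polytope

section Objective

variable {n : ℕ}

theorem binEntropy_eq_sum (y : Fin n → ℝ) : binEntropy y = ∑ i, Real.binEntropy (y i) := by
  simp only [binEntropy, Real.binEntropy, Real.log_inv, ← sum_neg_distrib]
  ring_nf

@[fun_prop]
theorem continuous_binEntropy : Continuous (binEntropy : (Fin n → ℝ) → ℝ) := by
  simp only [funext binEntropy_eq_sum]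
  fun_prop

theorem binEntropy_le_mul_log_two (y : Fin n → ℝ) : binEntropy y ≤ n * Real.log 2 := by
  simpa [binEntropy_eq_sum] using sum_le_sum fun i (_ : i ∈ univ) =>
    Real.binEntropy_le_log_two (p := y i)

theorem binEntropy_ite_mem (T : Finset (Fin n)) :
    binEntropy (fun i => if i ∈ T then 1 else 0) = 0 := by
  simp [binEntropy_eq_sum, apply_ite Real.binEntropy]

noncomputable def lmlObjective (x : Fin n → ℝ) (τ : ℝ) (z : Fin n → ℝ) : ℝ :=
  -(∑ i, x i * z i) - τ * binEntropy z

theorem sum_sub_sum_mul_le_of_isMinOn {x y : Fin n → ℝ} {τ : ℝ} {T : Finset (Fin n)}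
    (hT0 : 0 < #T) (hT : #T < n) (hy : IsMinOn (lmlObjective x τ) (lmlPolytope (Fin n) #T) y) :
    ∑ i ∈ T, x i - ∑ i, x i * y i ≤ τ * binEntropy y := by
  have hcont : Continuous (lmlObjective x τ) := by
    unfold lmlObjective; fun_prop
  have : lmlObjective x τ y ≤ lmlObjective x τ fun i => if i ∈ T then 1 else 0 :=
    hy.closure hcont.continuousOn <| indicator_mem_closure_lmlPolytope hT0 (by simpa using hT)
  simp only [lmlObjective, binEntropy_ite_mem, mul_ite, mul_one,
    mul_zero, sum_ite_mem, univ_inter] at this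
  linarith

theorem sum_compl_le_of_isMinOn {x y : Fin n → ℝ} {τ a b : ℝ} {T : Finset (Fin n)}
    (hτ : 0 ≤ τ) (hT0 : 0 < #T) (hT : #T < n) (hab : b < a) (ha : ∀ i ∈ T, a ≤ x i)
    (hb : ∀ i ∈ Tᶜ, x i ≤ b) (hyT : y ∈ lmlPolytope (Fin n) #T)
    (hy : IsMinOn (lmlObjective x τ) (lmlPolytope (Fin n) #T) y) :
    ∑ i ∈ Tᶜ, y i ≤ τ * (n * Real.log 2) / (a - b) := by
  rw [le_div_iff₀ (sub_pos.mpr hab), mul_comm]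
  calc (a - b) * ∑ i ∈ Tᶜ, y i ≤ ∑ i ∈ T, x i - ∑ i, x i * y i :=
        mul_sum_compl_le_sum_sub_sum_mul (fun i => Set.Ioo_subset_Icc_self (hyT.1 i)) hyT.2 ha hb
    _ ≤ τ * binEntropy y := sum_sub_sum_mul_le_of_isMinOn hT0 hT hy
    _ ≤ τ * (n * Real.log 2) := mul_le_mul_of_nonneg_left (binEntropy_le_mul_log_two y) hτ

theorem tendsto_sum_compl_of_isMinOn {x : Fin n → ℝ} {y : ℝ → Fin n → ℝ} {a b : ℝ}
    {T : Finset (Fin n)} (hT0 : 0 < #T) (hT : #T < n) (hab : b < a) (ha : ∀ i ∈ T, a ≤ x i)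
    (hb : ∀ i ∈ Tᶜ, x i ≤ b) (hyT : ∀ τ : ℝ, 0 < τ → y τ ∈ lmlPolytope (Fin n) #T)
    (hy : ∀ τ : ℝ, 0 < τ → IsMinOn (lmlObjective x τ) (lmlPolytope (Fin n) #T) (y τ)) :
    Tendsto (fun τ => ∑ i ∈ Tᶜ, y τ i) (𝓝[>] 0) (𝓝 0) := by
  refine squeeze_zero' (eventually_nhdsWithin_of_forall fun τ hτ =>
      sum_nonneg fun i _ => ((hyT τ hτ).1 i).1.le)
    (eventually_nhdsWithin_of_forall fun τ hτ =>
      sum_compl_le_of_isMinOn hτ.le hT0 hT hab ha hb (hyT τ hτ) (hy τ hτ))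
    (tendsto_nhdsWithin_of_tendsto_nhds ?_)
  simpa using ((continuous_mul_const _).div_const _).tendsto (0 : ℝ)

end Objective

section Convergence

variable {ι : Type*} [Fintype ι] [DecidableEq ι] {T : Finset ι} {y : ℝ → ι → ℝ} {l : Filter ℝ}

theorem tendsto_one_of_mem_of_tendsto_sum_compl (hy : ∀ᶠ τ in l, y τ ∈ lmlPolytope ι #T)
    (hmass : Tendsto (fun τ => ∑ j ∈ Tᶜ, y τ j) l (𝓝 0)) {i : ι} (hi : i ∈ T) :
    Tendsto (fun τ => y τ i) l (𝓝 1) := by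
  have h : Tendsto (fun τ => 1 - y τ i) l (𝓝 0) :=
    squeeze_zero' (hy.mono fun _ hτ => sub_nonneg.mpr (hτ.1 i).2.le) (hy.mono fun τ hτ => by
      rw [← sum_one_sub_eq_sum_compl hτ.2]
      exact single_le_sum (f := fun j => 1 - y τ j) (fun j _ => sub_nonneg.mpr (hτ.1 j).2.le) hi)
      hmass
  simpa only [sub_sub_cancel, sub_zero] using (tendsto_const_nhds (x := (1 : ℝ))).sub h

theorem tendsto_zero_of_mem_compl_of_tendsto_sum_compl (hy : ∀ᶠ τ in l, y τ ∈ lmlPolytope ι #T)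
    (hmass : Tendsto (fun τ => ∑ j ∈ Tᶜ, y τ j) l (𝓝 0)) {i : ι} (hi : i ∈ Tᶜ) :
    Tendsto (fun τ => y τ i) l (𝓝 0) :=
  squeeze_zero' (hy.mono fun _ hτ => (hτ.1 i).1.le)
    (hy.mono fun _ hτ => single_le_sum (fun j _ => (hτ.1 j).1.le) hi) hmass

end Convergence

theorem dcem_lml_proj_tendsto_hard_topk_general (n k : ℕ)
    (hk0 : 0 < k) (hkn : k < n) (x : Fin n → ℝ) (hdist : Function.Injective x)
    (y : ℝ → (Fin n → ℝ))
    (hy : ∀ τ : ℝ, 0 < τ →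
      (∀ i, y τ i ∈ Set.Ioo (0 : ℝ) 1) ∧ (∑ i, y τ i) = k ∧
      (∀ z : Fin n → ℝ, (∀ i, z i ∈ Set.Ioo (0 : ℝ) 1) → (∑ i, z i) = k → z ≠ y τ →
        -(∑ i, x i * y τ i) - τ * binEntropy (y τ) <
          -(∑ i, x i * z i) - τ * binEntropy z)) :
    ∀ i : Fin n,
      (((Finset.univ.filter fun j => x i < x j).card < k →
        Tendsto (fun τ => y τ i) (nhdsWithin 0 (Set.Ioi 0)) (nhds 1)) ∧
      (¬ (Finset.univ.filter fun j => x i < x j).card < k →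
        Tendsto (fun τ => y τ i) (nhdsWithin 0 (Set.Ioi 0)) (nhds 0))) := by
  set T : Finset (Fin n) := {i | descRank x i < k}
  have hT : #T = k := card_descRank_lt hdist (by simpa using hkn.le)
  have hTne : T.Nonempty := card_pos.mp (hT ▸ hk0)
  have hTcne : Tᶜ.Nonempty := card_pos.mp (by rw [card_compl, Fintype.card_fin]; omega)
  have hgap : Tᶜ.sup' hTcne x < T.inf' hTne x := by
    simp only [sup'_lt_iff, lt_inf'_iff, mem_compl, T, mem_filter_univ, not_lt]
    exact fun j hj i hi => lt_of_descRank_lt_descRank hdist (by omega)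
  have hyT : ∀ τ : ℝ, 0 < τ → y τ ∈ lmlPolytope (Fin n) #T :=
    fun τ hτ => ⟨(hy τ hτ).1, hT ▸ (hy τ hτ).2.1⟩
  have hmass := tendsto_sum_compl_of_isMinOn (hT ▸ hk0) (hT ▸ hkn) hgap
    (fun i hi => inf'_le x hi) (fun i hi => le_sup' x hi) hyT fun τ hτ =>
      isMinOn_of_forall_ne_lt fun z hz hne => (hy τ hτ).2.2 z hz.1 (hT ▸ hz.2) hne
  have hyT' : ∀ᶠ τ in 𝓝[>] 0, y τ ∈ lmlPolytope (Fin n) #T := eventually_nhdsWithin_of_forall hyT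
  exact fun i => ⟨fun hi => tendsto_one_of_mem_of_tendsto_sum_compl hyT' hmass
      (mem_filter.mpr ⟨mem_univ i, hi⟩),
    fun hi => tendsto_zero_of_mem_compl_of_tendsto_sum_compl hyT' hmass
      (mem_compl.mpr fun h => hi (mem_filter.mp h).2)⟩

/-- The temperature-scaled LML projection approaches the hard top-`k` operation as
`τ → 0⁺`: if for each `τ > 0`, `y τ` is the unique minimizer of `-⟪x,y⟫ - τ·H_b(y)` over
`{y : 0 < yᵢ < 1, ∑ᵢ yᵢ = k}`, and the coordinates of `x` are pairwise distinct, then as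
`τ → 0⁺` the coordinate `y τ i` tends to `1` when `x i` is among the `k` largest
coordinates of `x` (i.e. fewer than `k` coordinates exceed it) and tends to `0`
otherwise. -/
theorem dcem_lml_proj_tendsto_hard_topk (n k : ℕ) (hn : 1 ≤ n)
    (hk0 : 0 < k) (hkn : k < n) (x : Fin n → ℝ) (hdist : Function.Injective x)
    (y : ℝ → (Fin n → ℝ))
    (hy : ∀ τ : ℝ, 0 < τ →
      (∀ i, y τ i ∈ Set.Ioo (0 : ℝ) 1) ∧ (∑ i, y τ i) = k ∧
      (∀ z : Fin n → ℝ, (∀ i, z i ∈ Set.Ioo (0 : ℝ) 1) → (∑ i, z i) = k → z ≠ y τ →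
        -(∑ i, x i * y τ i) - τ * binEntropy (y τ) <
          -(∑ i, x i * z i) - τ * binEntropy z)) :
    ∀ i : Fin n,
      (((Finset.univ.filter fun j => x i < x j).card < k →
        Tendsto (fun τ => y τ i) (nhdsWithin 0 (Set.Ioi 0)) (nhds 1)) ∧
      (¬ (Finset.univ.filter fun j => x i < x j).card < k →
        Tendsto (fun τ => y τ i) (nhdsWithin 0 (Set.Ioi 0)) (nhds 0))) :=
  dcem_lml_proj_tendsto_hard_topk_general n k hk0 hkn x hdist y hy
end

section
/- Let n ≥ 1, let k be an integer with 0 < k < n, let x ∈ ℝⁿ, and let τ > 0. Then the function y ↦ −xᵀy − τ·H_b(y) attains its infimum over the closed polytope L_{n,k} = {y ∈ ℝⁿ : 0 ≤ yᵢ ≤ 1, Σᵢ yᵢ = k} at a unique point, and this minimizer lies in the relative interior, i.e., all of its coordinates lie strictly between 0 and 1. -/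
open Finset

namespace LMLAux

noncomputable def φ (s : ℝ) : ℝ := s * Real.log s + (1 - s) * Real.log (1 - s)

lemma φ_eq_neg_binEntropy : φ = fun s => -Real.binEntropy s := by
  funext s
  simp only [φ, Real.binEntropy, Real.log_inv]
  ring

lemma φ_continuous : Continuous φ :=
  Real.continuous_mul_log.add
    (Real.continuous_mul_log.comp (continuous_const.sub continuous_id))

lemma φ_strictConvexOn : StrictConvexOn ℝ (Set.Icc 0 1) φ := by
  rw [φ_eq_neg_binEntropy]
  exact Real.strictConcave_binEntropy.neg

lemma φ_convexOn : ConvexOn ℝ (Set.Icc 0 1) φ := φ_strictConvexOn.convexOn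

lemma φ_zero : φ 0 = 0 := by simp [φ]

lemma φ_one : φ 1 = 0 := by simp [φ]

lemma φ_symm (s : ℝ) : φ (1 - s) = φ s := by
  simp only [φ, sub_sub_cancel]
  ring

lemma φ_nonpos {s : ℝ} (hs : s ∈ Set.Icc (0:ℝ) 1) : φ s ≤ 0 := by
  have h1 : s * Real.log s ≤ 0 :=
    mul_nonpos_of_nonneg_of_nonpos hs.1 (Real.log_nonpos hs.1 hs.2)
  have h2 : (1 - s) * Real.log (1 - s) ≤ 0 :=
    mul_nonpos_of_nonneg_of_nonpos (by linarith [hs.2])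
      (Real.log_nonpos (by linarith [hs.2]) (by linarith [hs.1]))
  simpa [φ] using add_nonpos h1 h2

lemma mul_log_ge {s : ℝ} (h0 : 0 ≤ s) (h1 : s ≤ 1) : -1 ≤ s * Real.log s := by
  rcases eq_or_lt_of_le h0 with h | h
  · simp [← h]
  · have hlog : Real.log s⁻¹ ≤ s⁻¹ - 1 := Real.log_le_sub_one_of_pos (by positivity)
    rw [Real.log_inv] at hlog
    have h2 : -(s⁻¹ - 1) ≤ Real.log s := by linarith
    have h3 := mul_le_mul_of_nonneg_left h2 h0
    have hs : s * (s⁻¹ - 1) = 1 - s := by field_simp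
    nlinarith [h3]

lemma φ_ge {s : ℝ} (hs : s ∈ Set.Icc (0:ℝ) 1) : -2 ≤ φ s := by
  have h1 := mul_log_ge hs.1 hs.2
  have h2 := mul_log_ge (by linarith [hs.2] : (0:ℝ) ≤ 1 - s) (by linarith [hs.1])
  simp only [φ]; linarith

lemma φ_le_mul_log {s : ℝ} (h0 : 0 ≤ s) (h1 : s ≤ 1) : φ s ≤ s * Real.log s := by
  have h2 : (1 - s) * Real.log (1 - s) ≤ 0 :=
    mul_nonpos_of_nonneg_of_nonpos (by linarith) (Real.log_nonpos (by linarith) (by linarith))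
  simp only [φ]; linarith

end LMLAux

set_option maxHeartbeats 1000000 in
open LMLAux in
/-- For `n ≥ 1`, `0 < k < n`, `x ∈ ℝⁿ` and `τ > 0`, the function
`y ↦ -⟪x, y⟫ - τ·H_b(y)` attains its infimum over the closed LML polytope
`L_{n,k} = {y : 0 ≤ yᵢ ≤ 1, ∑ᵢ yᵢ = k}` at a unique point, and this minimizer lies in the
relative interior, i.e. all its coordinates are strictly between `0` and `1`. -/
theorem lml_objective_unique_interior_minimizer (n k : ℕ) (hn : 1 ≤ n)
    (hk0 : 0 < k) (hkn : k < n) (x : Fin n → ℝ) (τ : ℝ) (hτ : 0 < τ) :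
    ∃ y : Fin n → ℝ,
      ((∀ i, y i ∈ Set.Icc (0 : ℝ) 1) ∧ (∑ i, y i) = k) ∧
      (∀ z : Fin n → ℝ, (∀ i, z i ∈ Set.Icc (0 : ℝ) 1) → (∑ i, z i) = k →
        -(∑ i, x i * y i) - τ * binEntropy y ≤ -(∑ i, x i * z i) - τ * binEntropy z) ∧
      (∀ i, y i ∈ Set.Ioo (0 : ℝ) 1) ∧
      (∀ z : Fin n → ℝ, (∀ i, z i ∈ Set.Icc (0 : ℝ) 1) → (∑ i, z i) = k →
        (∀ w : Fin n → ℝ, (∀ i, w i ∈ Set.Icc (0 : ℝ) 1) → (∑ i, w i) = k →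
          -(∑ i, x i * z i) - τ * binEntropy z ≤ -(∑ i, x i * w i) - τ * binEntropy w) →
        z = y) := by
  classical
  have hn0 : (0:ℝ) < n := by exact_mod_cast Nat.pos_of_ne_zero (by omega)
  set c : ℝ := (k:ℝ)/n with hcdef
  have hc0 : 0 < c := by positivity
  have hc1 : c < 1 := by
    rw [hcdef, div_lt_one hn0]; exact_mod_cast hkn
  have hcIcc : c ∈ Set.Icc (0:ℝ) 1 := ⟨hc0.le, hc1.le⟩
  set K : Set (Fin n → ℝ) := {v | (∀ i, v i ∈ Set.Icc (0:ℝ) 1) ∧ (∑ i, v i) = k} with hKdef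
  set F : (Fin n → ℝ) → ℝ := fun v => -(∑ i, x i * v i) - τ * binEntropy v with hFdef
  have hFφ : ∀ v, F v = -(∑ i, x i * v i) + τ * ∑ i, φ (v i) := by
    intro v
    show -(∑ i, x i * v i) - τ * binEntropy v = _
    simp only [binEntropy, φ]
    ring
  -- compactness
  have hKc : IsCompact K := by
    have h1 : IsCompact {v : Fin n → ℝ | ∀ i, v i ∈ Set.Icc (0:ℝ) 1} := by
      have h := isCompact_univ_pi (fun _ : Fin n => isCompact_Icc (a := (0:ℝ)) (b := 1))
      have he : {v : Fin n → ℝ | ∀ i, v i ∈ Set.Icc (0:ℝ) 1} =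
          Set.pi Set.univ (fun _ : Fin n => Set.Icc (0:ℝ) 1) := by
        ext v; simp [Set.mem_pi, Pi.le_def, forall_and]
      rw [he]; exact h
    have h2 : IsClosed {v : Fin n → ℝ | (∑ i, v i) = (k:ℝ)} :=
      isClosed_eq (continuous_finset_sum _ fun i _ => continuous_apply i) continuous_const
    have hEq : K = {v : Fin n → ℝ | ∀ i, v i ∈ Set.Icc (0:ℝ) 1} ∩
        {v : Fin n → ℝ | (∑ i, v i) = (k:ℝ)} := rfl
    rw [hEq]; exact h1.inter_right h2
  -- nonempty
  have hsumc : ∀ t : ℝ, (∑ _i : Fin n, t) = n * t := by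
    intro t; rw [Finset.sum_const, Finset.card_univ, Fintype.card_fin, nsmul_eq_mul]
  have hcK : (fun _ : Fin n => c) ∈ K := by
    constructor
    · intro _; exact hcIcc
    · rw [hsumc, hcdef]; field_simp
  -- continuity
  have hFc : Continuous F := by
    apply Continuous.sub
    · exact (continuous_finset_sum _ fun i _ =>
        continuous_const.mul (continuous_apply i)).neg
    · apply continuous_const.mul
      show Continuous fun v : Fin n → ℝ => binEntropy v
      unfold binEntropy
      exact (continuous_finset_sum _ fun i _ =>
        (φ_continuous.comp (continuous_apply i) : _)).neg
  obtain ⟨y, hyK, hymin⟩ := hKc.exists_isMinOn ⟨_, hcK⟩ hFc.continuousOn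
  have hymin' : ∀ z ∈ K, F y ≤ F z := fun z hz => isMinOn_iff.1 hymin z hz
  -- interiority
  have hyI : ∀ i, y i ∈ Set.Ioo (0:ℝ) 1 := by
    by_contra hcon
    push_neg at hcon
    obtain ⟨i0, hi0⟩ := hcon
    have hbd : y i0 = 0 ∨ y i0 = 1 := by
      obtain ⟨h0, h1⟩ := hyK.1 i0
      rcases eq_or_lt_of_le h0 with h | h
      · exact Or.inl h.symm
      rcases eq_or_lt_of_le h1 with h' | h'
      · exact Or.inr h'
      · exact absurd ⟨h, h'⟩ hi0
    set c' : ℝ := if y i0 = 0 then c else 1 - c with hc'def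
    have hc'0 : 0 < c' := by rw [hc'def]; split_ifs <;> linarith
    have hc'1 : c' < 1 := by rw [hc'def]; split_ifs <;> linarith
    set X : ℝ := ∑ i, |x i| with hXdef
    have hX0 : 0 ≤ X := Finset.sum_nonneg fun i _ => abs_nonneg _
    set B : ℝ := X + 2*τ*n + 1 with hBdef
    have hB0 : 0 < B := by positivity
    set t : ℝ := min (1/2) (Real.exp (-B/(τ*c')) / c') with htdef
    have ht0 : 0 < t := lt_min (by norm_num) (by positivity)
    have ht2 : t ≤ 1/2 := min_le_left _ _
    have ht1 : t < 1 := by linarith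
    set z : Fin n → ℝ := fun i => (1 - t) * y i + t * c with hzdef
    have hzIcc : ∀ i, z i ∈ Set.Icc (0:ℝ) 1 := by
      intro i
      obtain ⟨h0, h1⟩ := hyK.1 i
      constructor
      · show (0:ℝ) ≤ (1 - t) * y i + t * c
        nlinarith
      · show (1 - t) * y i + t * c ≤ 1
        nlinarith
    have hzK : z ∈ K := by
      refine ⟨hzIcc, ?_⟩
      show (∑ i, ((1 - t) * y i + t * c)) = (k:ℝ)
      rw [Finset.sum_add_distrib, ← Finset.mul_sum, hyK.2, Finset.sum_const,
        Finset.card_univ, Fintype.card_fin, nsmul_eq_mul]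
      have : (n:ℝ) * (t * c) = t * (n * c) := by ring
      rw [this]
      have hnc : (n:ℝ) * c = k := by rw [hcdef]; field_simp
      rw [hnc]; ring
    -- convexity bound for each coordinate
    have hconv : ∀ i, φ (z i) - φ (y i) ≤ 2*t := by
      intro i
      have h := φ_convexOn.2 (hyK.1 i) hcIcc (by linarith : (0:ℝ) ≤ 1 - t) ht0.le (by ring)
      simp only [smul_eq_mul] at h
      have h1 : φ c ≤ 0 := φ_nonpos hcIcc
      have h2 : -2 ≤ φ (y i) := φ_ge (hyK.1 i)
      have hzi : z i = (1 - t) * y i + t * c := rfl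
      rw [hzi]
      nlinarith
    -- sharp bound at the boundary coordinate
    have htc1 : t * c' < 1 := by nlinarith
    have htc0 : 0 < t * c' := by positivity
    have hsharp : φ (z i0) - φ (y i0) ≤ t * c' * Real.log (t * c') := by
      rcases hbd with h | h
      · have hzi : z i0 = t * c' := by
          show (1 - t) * y i0 + t * c = t * c'
          rw [h, hc'def, if_pos h]; ring
        rw [hzi, h, φ_zero, sub_zero]
        exact φ_le_mul_log htc0.le htc1.le
      · have hy0 : y i0 ≠ 0 := by rw [h]; norm_num
        have hzi : z i0 = 1 - t * c' := by
          show (1 - t) * y i0 + t * c = 1 - t * c'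
          rw [h, hc'def, if_neg hy0]; ring
        rw [hzi, h, φ_one, sub_zero, φ_symm]
        exact φ_le_mul_log htc0.le htc1.le
    have hlog : Real.log (t * c') ≤ -B/(τ*c') := by
      rw [Real.log_le_iff_le_exp htc0]
      have hm := min_le_right (1/2) (Real.exp (-B/(τ*c')) / c')
      calc t * c' ≤ (Real.exp (-B/(τ*c')) / c') * c' := by nlinarith
        _ = Real.exp (-B/(τ*c')) := by field_simp
    have hτsharp : τ * (φ (z i0) - φ (y i0)) ≤ -(t*B) := by
      have h1 : Real.log (t * c') * (τ * c') ≤ -B :=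
        (le_div_iff₀ (by positivity)).1 hlog
      have h2 := mul_le_mul_of_nonneg_left h1 ht0.le
      have h3 : τ * (t * c' * Real.log (t * c')) = t * (Real.log (t * c') * (τ * c')) := by
        ring
      have h4 := mul_le_mul_of_nonneg_left hsharp hτ.le
      calc τ * (φ (z i0) - φ (y i0)) ≤ τ * (t * c' * Real.log (t * c')) := h4
        _ = t * (Real.log (t * c') * (τ * c')) := h3
        _ ≤ t * (-B) := h2
        _ = -(t*B) := by ring
    -- sum bound
    have hsum : (∑ i, (φ (z i) - φ (y i))) ≤ (φ (z i0) - φ (y i0)) + 2*t*n := by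
      rw [← Finset.add_sum_erase _ _ (Finset.mem_univ i0)]
      have h1 : (∑ i ∈ Finset.univ.erase i0, (φ (z i) - φ (y i))) ≤
          ∑ _i ∈ Finset.univ.erase i0, (2*t) := Finset.sum_le_sum fun i _ => hconv i
      have h2 : (∑ _i ∈ Finset.univ.erase i0, (2*t : ℝ)) =
          ((Finset.univ.erase i0).card : ℝ) * (2*t) := by
        rw [Finset.sum_const, nsmul_eq_mul]
      have h3 : ((Finset.univ.erase i0).card : ℝ) ≤ n := by
        have := Finset.card_erase_le (a := i0) (s := (Finset.univ : Finset (Fin n)))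
        have h4 : (Finset.univ : Finset (Fin n)).card = n := by
          rw [Finset.card_univ, Fintype.card_fin]
        exact_mod_cast h4 ▸ this
      nlinarith
    -- linear part
    have hlinsum : (∑ i, x i * z i) = (∑ i, x i * y i) + t * ∑ i, x i * (c - y i) := by
      rw [Finset.mul_sum, ← Finset.sum_add_distrib]
      refine Finset.sum_congr rfl fun i _ => ?_
      show x i * ((1 - t) * y i + t * c) = _
      ring
    have hS : |∑ i, x i * (c - y i)| ≤ X := by
      calc |∑ i, x i * (c - y i)| ≤ ∑ i, |x i * (c - y i)| :=
            Finset.abs_sum_le_sum_abs _ _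
        _ ≤ ∑ i, |x i| := by
            refine Finset.sum_le_sum fun i _ => ?_
            rw [abs_mul]
            obtain ⟨h0, h1⟩ := hyK.1 i
            have habs : |c - y i| ≤ 1 := by rw [abs_le]; constructor <;> linarith
            nlinarith [abs_nonneg (x i)]
        _ = X := rfl
    -- combine
    have hFzy : F z - F y ≤ -t := by
      have hτD : τ * (∑ i, φ (z i)) - τ * (∑ i, φ (y i)) =
          τ * ∑ i, (φ (z i) - φ (y i)) := by
        rw [Finset.sum_sub_distrib]; ring
      have h6 : τ * (∑ i, (φ (z i) - φ (y i))) ≤ -(t*B) + τ*(2*t*n) := by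
        have h6a := mul_le_mul_of_nonneg_left hsum hτ.le
        have h6b : τ * ((φ (z i0) - φ (y i0)) + 2*t*↑n) =
            τ*(φ (z i0) - φ (y i0)) + τ*(2*t*↑n) := by ring
        linarith [hτsharp]
      have h7 := abs_le.1 hS
      have h8 : -(t * ∑ i, x i * (c - y i)) ≤ t * X := by
        nlinarith [mul_le_mul_of_nonneg_left h7.1 ht0.le]
      have hBt : t*B = t*X + τ*(2*t*↑n) + t := by rw [hBdef]; ring
      rw [hFφ z, hFφ y, hlinsum]
      linarith [h6, h8, hτD, hBt]
    have := hymin' z hzK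
    linarith
  -- assemble
  refine ⟨y, hyK, ?_, hyI, ?_⟩
  · intro z hz1 hz2
    exact hymin' z ⟨hz1, hz2⟩
  · intro z hz1 hz2 hzmin
    by_contra hne
    obtain ⟨j, hj⟩ : ∃ j, z j ≠ y j := by
      by_contra h; push_neg at h; exact hne (funext h)
    have hzK : z ∈ K := ⟨hz1, hz2⟩
    have hzmin' : ∀ w ∈ K, F z ≤ F w := fun w hw => hzmin w hw.1 hw.2
    set m : Fin n → ℝ := fun i => (z i + y i)/2 with hmdef
    have hmK : m ∈ K := by
      constructor
      · intro i
        obtain ⟨h0, h1⟩ := hz1 i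
        obtain ⟨h0', h1'⟩ := hyK.1 i
        constructor
        · show (0:ℝ) ≤ (z i + y i)/2; linarith
        · show (z i + y i)/2 ≤ 1; linarith
      · show (∑ i, (z i + y i)/2) = (k:ℝ)
        rw [← Finset.sum_div, Finset.sum_add_distrib, hz2, hyK.2]
        ring
    have hφle : ∀ i, φ (m i) ≤ (φ (z i) + φ (y i))/2 := by
      intro i
      have h := φ_convexOn.2 (hz1 i) (hyK.1 i)
        (by norm_num : (0:ℝ) ≤ 1/2) (by norm_num : (0:ℝ) ≤ 1/2) (by norm_num)
      simp only [smul_eq_mul] at h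
      have hmi : m i = 1/2 * z i + 1/2 * y i := by
        show (z i + y i)/2 = _; ring
      rw [hmi]
      linarith
    have hφlt : φ (m j) < (φ (z j) + φ (y j))/2 := by
      have h := φ_strictConvexOn.2 (hz1 j) (hyK.1 j) hj
        (by norm_num : (0:ℝ) < 1/2) (by norm_num : (0:ℝ) < 1/2) (by norm_num)
      simp only [smul_eq_mul] at h
      have hmj : m j = 1/2 * z j + 1/2 * y j := by
        show (z j + y j)/2 = _; ring
      rw [hmj]
      linarith
    have hsumφ : (∑ i, φ (m i)) < ∑ i, (φ (z i) + φ (y i))/2 :=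
      Finset.sum_lt_sum (fun i _ => hφle i) ⟨j, Finset.mem_univ j, hφlt⟩
    have hlinm : (∑ i, x i * m i) = ((∑ i, x i * z i) + (∑ i, x i * y i))/2 := by
      rw [← Finset.sum_add_distrib, Finset.sum_div]
      refine Finset.sum_congr rfl fun i _ => ?_
      show x i * ((z i + y i)/2) = _
      ring
    have hFm : F m < (F z + F y)/2 := by
      rw [hFφ m, hFφ z, hFφ y, hlinm]
      have h1 : (∑ i, (φ (z i) + φ (y i))/2) =
          ((∑ i, φ (z i)) + ∑ i, φ (y i))/2 := by
        rw [← Finset.sum_div, Finset.sum_add_distrib]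
      rw [h1] at hsumφ
      nlinarith [hsumφ]
    have h1 : F z ≤ F y := hzmin' y hyK
    have h2 : F y ≤ F z := hymin' z hzK
    have h3 : F y ≤ F m := hymin' m hmK
    clear_value F
    linarith
end

section
/- Let n ≥ 1, let x ∈ ℝⁿ, let τ > 0, and let k be a real number with 0 < k < n. The function ν ↦ Σᵢ σ((xᵢ + ν)/τ) is continuous and strictly increasing on ℝ, tends to 0 as ν → −∞ and to n as ν → +∞, and hence there exists a unique ν* ∈ ℝ with Σᵢ σ((xᵢ + ν*)/τ) = k. -/
/-! Each summand is a shifted and rescaled copy of Mathlib's `Real.sigmoid`, which is continuous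
and strictly increasing from `0` to `1`; so the sum increases strictly from `0` to `n`, and the
intermediate value theorem gives the value `k` at exactly one point. -/

open Finset Filter

/-- The sigmoid function `σ(t) = 1 / (1 + exp (-t))`. -/
noncomputable def sigmoid (t : ℝ) : ℝ := 1 / (1 + Real.exp (-t))

theorem sigmoid_eq_real_sigmoid : sigmoid = Real.sigmoid := by
  funext t
  rw [sigmoid, Real.sigmoid_def, one_div]

theorem Continuous.existsUnique_eq_of_tendsto {α β : Type*} [LinearOrder α] [Nonempty α]
    [TopologicalSpace α] [PreconnectedSpace α] [LinearOrder β] [TopologicalSpace β]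
    [OrderClosedTopology β] {f : α → β} (hf : Continuous f) (hinj : Function.Injective f)
    {a b c : β} (hbot : Tendsto f atBot (nhds a)) (htop : Tendsto f atTop (nhds b))
    (hac : a < c) (hcb : c < b) : ∃! x, f x = c := by
  obtain ⟨x₁, hx₁⟩ := (hbot.eventually (eventually_lt_nhds hac)).exists
  obtain ⟨x₂, hx₂⟩ := (htop.eventually (eventually_gt_nhds hcb)).exists
  obtain ⟨x, hx⟩ := intermediate_value_univ x₁ x₂ hf ⟨hx₁.le, hx₂.le⟩
  exact ⟨x, hx, fun y hy => hinj (hy.trans hx.symm)⟩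

section DualFunction

variable {ι : Type*} [Fintype ι] (x : ι → ℝ) {τ : ℝ}

theorem continuous_sum_sigmoid : Continuous (fun ν : ℝ => ∑ i, sigmoid ((x i + ν) / τ)) := by
  rw [sigmoid_eq_real_sigmoid]
  fun_prop

theorem strictMono_sum_sigmoid [Nonempty ι] (hτ : 0 < τ) :
    StrictMono (fun ν : ℝ => ∑ i, sigmoid ((x i + ν) / τ)) := fun ν μ hνμ => by
  rw [sigmoid_eq_real_sigmoid]
  refine Finset.sum_lt_sum_of_nonempty univ_nonempty fun i _ => Real.sigmoid_lt ?_
  gcongr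

theorem tendsto_sum_sigmoid_atBot (hτ : 0 < τ) :
    Tendsto (fun ν : ℝ => ∑ i, sigmoid ((x i + ν) / τ)) atBot (nhds 0) := by
  rw [sigmoid_eq_real_sigmoid]
  simpa using tendsto_finsetSum univ fun i _ => Real.tendsto_sigmoid_atBot.comp
    ((tendsto_atBot_add_const_left _ (x i) tendsto_id).atBot_div_const hτ)

theorem tendsto_sum_sigmoid_atTop (hτ : 0 < τ) :
    Tendsto (fun ν : ℝ => ∑ i, sigmoid ((x i + ν) / τ)) atTop (nhds (Fintype.card ι)) := by
  rw [sigmoid_eq_real_sigmoid]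
  simpa using tendsto_finsetSum univ fun i _ => Real.tendsto_sigmoid_atTop.comp
    ((tendsto_atTop_add_const_left _ (x i) tendsto_id).atTop_div_const hτ)

end DualFunction

theorem lml_dual_function_properties_general (n : ℕ) (x : Fin n → ℝ)
    (τ : ℝ) (hτ : 0 < τ) (k : ℝ) (hk0 : 0 < k) (hkn : k < n) :
    Continuous (fun ν : ℝ => ∑ i, sigmoid ((x i + ν) / τ)) ∧
    StrictMono (fun ν : ℝ => ∑ i, sigmoid ((x i + ν) / τ)) ∧
    Tendsto (fun ν : ℝ => ∑ i, sigmoid ((x i + ν) / τ)) atBot (nhds 0) ∧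
    Tendsto (fun ν : ℝ => ∑ i, sigmoid ((x i + ν) / τ)) atTop (nhds n) ∧
    (∃! ν : ℝ, (∑ i, sigmoid ((x i + ν) / τ)) = k) := by
  have : Nonempty (Fin n) := Fin.pos_iff_nonempty.mp (Nat.cast_pos.mp (hk0.trans hkn))
  have hcont := continuous_sum_sigmoid x (τ := τ)
  have hmono := strictMono_sum_sigmoid x hτ
  have hbot := tendsto_sum_sigmoid_atBot x hτ
  have htop : Tendsto (fun ν : ℝ => ∑ i, sigmoid ((x i + ν) / τ)) atTop (nhds n) := by
    simpa using tendsto_sum_sigmoid_atTop x hτ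
  exact ⟨hcont, hmono, hbot, htop,
    hcont.existsUnique_eq_of_tendsto hmono.injective hbot htop hk0 hkn⟩

/-- For `n ≥ 1`, `x ∈ ℝⁿ`, `τ > 0` and a real `k` with `0 < k < n`, the dual function
`ν ↦ ∑ᵢ σ((xᵢ + ν)/τ)` is continuous and strictly increasing, tends to `0` as `ν → -∞`
and to `n` as `ν → +∞`, and hence there is a unique `ν*` with `∑ᵢ σ((xᵢ + ν*)/τ) = k`. -/
theorem lml_dual_function_properties (n : ℕ) (hn : 1 ≤ n) (x : Fin n → ℝ)
    (τ : ℝ) (hτ : 0 < τ) (k : ℝ) (hk0 : 0 < k) (hkn : k < n) :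
    Continuous (fun ν : ℝ => ∑ i, sigmoid ((x i + ν) / τ)) ∧
    StrictMono (fun ν : ℝ => ∑ i, sigmoid ((x i + ν) / τ)) ∧
    Tendsto (fun ν : ℝ => ∑ i, sigmoid ((x i + ν) / τ)) atBot (nhds 0) ∧
    Tendsto (fun ν : ℝ => ∑ i, sigmoid ((x i + ν) / τ)) atTop (nhds n) ∧
    (∃! ν : ℝ, (∑ i, sigmoid ((x i + ν) / τ)) = k) :=
  lml_dual_function_properties_general n x τ hτ k hk0 hkn
end
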